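/- arXiv:1510.04837 — 4 statements merged into one kernel-verified Lean document; each statement's English description precedes it below -/
import Mathlib

section
/- Let α > −1 be real, m an integer ≥ 0, and n₁ = m + 2p₁, n₂ = m + 2p₂ with integers p₁, p₂ ≥ 0. Then ∫₀¹ ²R_{n₁}^{m,α}(ρ) ²R_{n₂}^{m,α}(ρ) ρ (1−ρ²)^{−α} dρ = δ_{n₁n₂} · ²N_{nm}^{α}, where δ is the Kronecker delta and, for n = m + 2p, ²N_{nm}^{α} = 1/(2(n+α+1)) · (p+1)_α/(p+m+1)_α. -/
open Real MeasureTheory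

noncomputable def genBinom (a : ℝ) (p : ℕ) : ℝ :=
  (∏ j ∈ Finset.range p, (a - j)) / (Nat.factorial p : ℝ)

noncomputable def jacobiP (k : ℕ) (a b : ℝ) (x : ℝ) : ℝ :=
  ∑ j ∈ Finset.range (k + 1),
    genBinom ((k : ℝ) + a) (k - j) * genBinom ((k : ℝ) + b) j *
      ((x - 1) / 2) ^ j * ((x + 1) / 2) ^ (k - j)

/-- generalized Pochhammer symbol `(x)_α = Γ(x+α)/Γ(x)` -/
noncomputable def pochG (x α : ℝ) : ℝ := Real.Gamma (x + α) / Real.Gamma x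

/-- integer-order Pochhammer symbol `(x)_k = x(x+1)⋯(x+k−1)` -/
noncomputable def pochN (x : ℝ) (k : ℕ) : ℝ := ∏ j ∈ Finset.range k, (x + j)

/-- generalized 3D Zernike radial function `R_{l+2p}^{l,α}` -/
noncomputable def R3 (α : ℝ) (l p : ℕ) (ρ : ℝ) : ℝ :=
  ρ ^ l * (1 - ρ ^ 2) ^ α * jacobiP p α ((l : ℝ) + 1 / 2) (2 * ρ ^ 2 - 1)

/-- generalized 2D Zernike radial function `²R_{m+2p}^{m,α}` -/
noncomputable def R2 (α : ℝ) (m p : ℕ) (ρ : ℝ) : ℝ :=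
  ρ ^ m * (1 - ρ ^ 2) ^ α * jacobiP p α (m : ℝ) (2 * ρ ^ 2 - 1)

/-- spherical Bessel function of real order `a` -/
noncomputable def sphBessel (a : ℝ) (z : ℝ) : ℝ :=
  Real.sqrt π / 2 * (z / 2) ^ a *
    ∑' k : ℕ, (-(z ^ 2) / 4) ^ k / ((Nat.factorial k : ℝ) * Real.Gamma ((k : ℝ) + a + 3 / 2))

/-- Gegenbauer polynomial `C_n^λ` -/
noncomputable def gegenbauer (n : ℕ) (lam : ℝ) (x : ℝ) : ℝ :=
  ∑ k ∈ Finset.range (n / 2 + 1),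
    (-1) ^ k * Real.Gamma (((n - k : ℕ) : ℝ) + lam) /
      (Real.Gamma lam * (Nat.factorial k : ℝ) * (Nat.factorial (n - 2 * k) : ℝ)) *
      (2 * x) ^ (n - 2 * k)

/-- Legendre polynomial `P_l` -/
noncomputable def legendreFun (l : ℕ) (x : ℝ) : ℝ :=
  (1 / 2 ^ l) * ∑ k ∈ Finset.range (l + 1),
    ((Nat.choose l k : ℝ)) ^ 2 * (x - 1) ^ (l - k) * (x + 1) ^ k

/-- associated Legendre function `P_l^m` -/
noncomputable def assocLegendre (l m : ℕ) (x : ℝ) : ℝ :=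
  (1 - x ^ 2) ^ ((m : ℝ) / 2) * iteratedDeriv m (legendreFun l) x

/-- spherical harmonic `Y_l^m`, evaluated at a (unit) vector `v ∈ ℝ³`:
`cos θ = v 2`, `φ = arg (v 0 + i v 1)`. -/
noncomputable def sphHarm (l : ℕ) (m : ℤ) (v : EuclideanSpace ℝ (Fin 3)) : ℂ :=
  (-1 : ℂ) ^ m *
    (Real.sqrt ((2 * l + 1) / (4 * π) *
      (Nat.factorial (l - m.natAbs) : ℝ) / (Nat.factorial (l + m.natAbs) : ℝ)) : ℝ) *
    (assocLegendre l m.natAbs (v 2) : ℝ) *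
    Complex.exp (Complex.I * m * (Complex.arg (v 0 + Complex.I * v 1) : ℝ))

/-- generalized 3D Zernike function `Z_{nl}^{m,α}` on ℝ³ -/
noncomputable def Z3 (α : ℝ) (l p : ℕ) (m : ℤ) (ω : EuclideanSpace ℝ (Fin 3)) : ℂ :=
  (R3 α l p ‖ω‖ : ℝ) * sphHarm l m (‖ω‖⁻¹ • ω)

/-- `²N_{nm}^α` with `n = m + 2p` -/
noncomputable def N2 (α : ℝ) (m p : ℕ) : ℝ :=
  1 / (2 * (((m + 2 * p : ℕ) : ℝ) + α + 1)) *
    (pochG ((p : ℝ) + 1) α / pochG ((p : ℝ) + (m : ℝ) + 1) α)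


/-!
Substituting `x = ρ²`, the integral becomes `½ ∫₀¹ x ^ m (1 - x) ^ α P_p(2x - 1) P_q(2x - 1) dx`,
and `P_q^{(α,m)}(2x - 1)` is a polynomial in `x` of degree `q` whose leading
coefficient is `C(2q + α + m, q)` by Chu–Vandermonde. So for `q ≤ p` it suffices to know the
moments `∫ x ^ (m + j) (1 - x) ^ α P_p(2x - 1) dx` for `j ≤ p`. Expanding `P_p` and integrating
termwise with the Beta integral, each moment is a multiple of
`∑ i, (-1) ^ i C(p + m, i) C(p + m + j - i, m + j)`, which is a `(p + m)`-th forward difference of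
`x ↦ C(x, m + j)` and hence vanishes unless `j = p`.
-/

open Finset Polynomial Function
open scoped Nat

lemma genBinom_eq_choose (a : ℝ) (k : ℕ) : genBinom a k = Ring.choose a k := by
  rw [Ring.choose_eq_smul, genBinom, ← descPochhammer_eval_eq_prod_range, smul_eq_mul,
    div_eq_inv_mul, ← descPochhammer_map (algebraMap ℤ ℝ), eval_map_algebraMap, aeval_eq_smeval]

lemma genBinom_natCast (n k : ℕ) : genBinom n k = n.choose k := by
  rw [genBinom_eq_choose, Ring.choose_natCast]

lemma sum_genBinom_mul_genBinom (a b : ℝ) (k : ℕ) :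
    ∑ i ∈ range (k + 1), genBinom a (k - i) * genBinom b i = genBinom (a + b) k := by
  simp only [genBinom_eq_choose, Ring.add_choose_eq k (Commute.all a b),
    Nat.sum_antidiagonal_eq_sum_range_succ (fun i j => Ring.choose a i * Ring.choose b j)]
  rw [← sum_range_reflect]
  refine sum_congr rfl fun i hi => ?_
  rw [mem_range] at hi
  congr 2; omega

lemma genBinom_succ (a : ℝ) (k : ℕ) :
    genBinom (a + 1) (k + 1) = genBinom a k * (a + 1) / (k + 1) := by
  rw [genBinom, genBinom, prod_range_succ', Nat.factorial_succ]
  push_cast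
  field_simp
  rw [sub_zero, mul_comm]
  exact congrArg _ (prod_congr rfl fun j _ => by ring)

lemma genBinom_mul_Gamma {x : ℝ} (hx : 0 < x) (k : ℕ) :
    genBinom (x + k - 1) k * Gamma x = Gamma (x + k) / k ! := by
  induction k with
  | zero => simp [genBinom]
  | succ k ih =>
    have hxk : x + k ≠ 0 := by positivity
    rw [show x + (k + 1 : ℕ) - 1 = (x + k - 1) + 1 by push_cast; ring, genBinom_succ,
      show x + (k + 1 : ℕ) = (x + k) + 1 by push_cast; ring, Gamma_add_one hxk,
      Nat.factorial_succ]
    rw [div_mul_eq_mul_div, mul_right_comm, ih]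
    push_cast
    field_simp
    ring

lemma fwdDiff_iter_choose_eq (n k y : ℕ) :
    (fwdDiff 1)^[n] (fun x ↦ x.choose k : ℕ → ℤ) y
      = if n ≤ k then (y.choose (k - n) : ℤ) else 0 := by
  split_ifs with h
  · obtain ⟨d, rfl⟩ := Nat.exists_eq_add_of_le h
    rw [fwdDiff_iter_choose, Nat.add_sub_cancel_left]
  · obtain ⟨d, rfl⟩ := Nat.exists_eq_add_of_lt (not_le.mp h)
    have h1 : (fwdDiff 1)^[k] (fun x ↦ x.choose k : ℕ → ℤ) = fun _ ↦ 1 := by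
      simpa using fwdDiff_iter_choose 0 k
    rw [show k + d + 1 = d + 1 + k by ring, iterate_add_apply, h1, iterate_succ_apply,
      fwdDiff_const]
    simp [fwdDiff_iter_eq_sum_shift]

lemma sum_range_alternating_choose_mul_choose (n j k : ℕ) :
    ∑ i ∈ range (n + 1), (-1 : ℝ) ^ i * n.choose i * (n + j - i).choose k
      = if n ≤ k then (j.choose (k - n) : ℝ) else 0 := by
  have h := fwdDiff_iter_choose_eq n k j
  rw [fwdDiff_iter_eq_sum_shift, ← sum_range_reflect] at h
  have h' := congrArg (fun z : ℤ => (z : ℝ)) h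
  push_cast at h'
  rw [← h']
  refine sum_congr rfl fun i hi => ?_
  rw [mem_range] at hi
  rw [Nat.choose_symm (by omega), show n - (n - i) = i by omega,
    show n + j - i = j + (n - i) by omega]
  simp

lemma integral_pow_mul_one_sub_rpow (K : ℕ) {β : ℝ} (hβ : -1 < β) :
    ∫ x in (0:ℝ)..1, x ^ K * (1 - x) ^ β = K ! * Gamma (β + 1) / Gamma (K + β + 2) := by
  have hbeta := Complex.betaIntegral_eq_Gamma_mul_div (K + 1) (β + 1)
    (by simp only [Complex.add_re, Complex.natCast_re, Complex.one_re]; positivity)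
    (by simp only [Complex.add_re, Complex.ofReal_re, Complex.one_re]; linarith)
  have hcast : Complex.betaIntegral (K + 1) (β + 1)
      = ((∫ x in (0:ℝ)..1, x ^ K * (1 - x) ^ β : ℝ) : ℂ) := by
    rw [Complex.betaIntegral, ← intervalIntegral.integral_ofReal]
    refine intervalIntegral.integral_congr fun x hx => ?_
    rw [Set.uIcc_of_le zero_le_one] at hx
    simp only [add_sub_cancel_right]
    push_cast
    rw [← Complex.ofReal_one, ← Complex.ofReal_sub, Complex.ofReal_cpow (by linarith [hx.2])]
    norm_cast
  apply Complex.ofReal_injective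
  rw [← hcast, hbeta, show (K + 1 + (β + 1) : ℂ) = ((K + β + 2 : ℝ) : ℂ) by push_cast; ring,
    show (β + 1 : ℂ) = ((β + 1 : ℝ) : ℂ) by push_cast; ring, Complex.Gamma_ofReal,
    Complex.Gamma_ofReal, Complex.Gamma_nat_eq_factorial]
  push_cast
  rfl

lemma integral_pow_mul_one_sub_sq_rpow (K : ℕ) {β : ℝ} (hβ : -1 < β) :
    ∫ ρ in (0:ℝ)..1, ρ ^ (2 * K + 1) * (1 - ρ ^ 2) ^ β
      = K ! * Gamma (β + 1) / (2 * Gamma (K + β + 2)) := by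
  have hsubst := intervalIntegral.integral_comp_mul_deriv_of_deriv_nonneg
    (f := fun ρ : ℝ => ρ ^ 2) (f' := fun ρ => 2 * ρ) (g := fun x => x ^ K * (1 - x) ^ β)
    (a := 0) (b := 1) (by fun_prop) (fun ρ _ => by simpa using hasDerivAt_pow 2 ρ)
    (fun ρ hρ => by simp only [Set.mem_Ioo, min_eq_left zero_le_one] at hρ; linarith [hρ.1])
  simp only [Function.comp_def, ne_eq, OfNat.ofNat_ne_zero, not_false_eq_true, zero_pow,
    one_pow] at hsubst
  rw [integral_pow_mul_one_sub_rpow K hβ] at hsubst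
  calc ∫ ρ in (0:ℝ)..1, ρ ^ (2 * K + 1) * (1 - ρ ^ 2) ^ β
      = 2⁻¹ * ∫ ρ in (0:ℝ)..1, (ρ ^ 2) ^ K * (1 - ρ ^ 2) ^ β * (2 * ρ) := by
        rw [← intervalIntegral.integral_const_mul]
        congr 1 with ρ
        ring
    _ = _ := by rw [hsubst]; ring

lemma intervalIntegrable_pow_mul_one_sub_sq_rpow (N : ℕ) {β : ℝ} (hβ : -1 < β) :
    IntervalIntegrable (fun ρ : ℝ => ρ ^ N * (1 - ρ ^ 2) ^ β) volume 0 1 := by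
  have h1 : IntervalIntegrable (fun x : ℝ => (1 - x) ^ β) volume 0 1 := by
    simpa using (intervalIntegral.intervalIntegrable_rpow' hβ (a := 1) (b := 0)).comp_sub_left 1
  have h2 : ContinuousOn (fun ρ : ℝ => ρ ^ N * (1 + ρ) ^ β) (Set.uIcc 0 1) := by
    refine ContinuousOn.mul (by fun_prop) (ContinuousOn.rpow_const (by fun_prop) fun x hx => ?_)
    rw [Set.uIcc_of_le zero_le_one] at hx
    exact Or.inl (by linarith [hx.1])
  refine (h1.continuousOn_mul h2).congr_uIoo fun x hx => ?_
  rw [Set.uIoo_of_le zero_le_one] at hx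
  simp only
  rw [mul_assoc, ← mul_rpow (by linarith [hx.1]) (by linarith [hx.2])]
  ring_nf

noncomputable def shiftedJacobi (k : ℕ) (a b : ℝ) : ℝ[X] :=
  ∑ j ∈ range (k + 1),
    C (genBinom (k + a) (k - j) * genBinom (k + b) j) * ((X - 1) ^ j * X ^ (k - j))

lemma eval_shiftedJacobi (k : ℕ) (a b x : ℝ) :
    (shiftedJacobi k a b).eval x = jacobiP k a b (2 * x - 1) := by
  simp only [shiftedJacobi, jacobiP, eval_finsetSum, eval_mul, eval_C, eval_pow, eval_sub,
    eval_X, eval_one]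
  refine sum_congr rfl fun j _ => ?_
  rw [show (2 * x - 1 - 1) / 2 = x - 1 by ring, show (2 * x - 1 + 1) / 2 = x by ring]
  ring

lemma natDegree_shiftedJacobi_le (k : ℕ) (a b : ℝ) : (shiftedJacobi k a b).natDegree ≤ k := by
  refine natDegree_sum_le_of_forall_le _ _ fun j hj => ?_
  rw [mem_range] at hj
  compute_degree
  omega

lemma coeff_shiftedJacobi_self (k : ℕ) (a b : ℝ) :
    (shiftedJacobi k a b).coeff k = genBinom (2 * k + a + b) k := by
  have hlead : ∀ j ∈ range (k + 1), ((X - 1 : ℝ[X]) ^ j * X ^ (k - j)).coeff k = 1 := by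
    intro j hj
    have hmonic := ((monic_X_sub_C (1 : ℝ)).pow j).coeff_natDegree
    rw [natDegree_pow, natDegree_X_sub_C, mul_one, C_1] at hmonic
    rwa [← Nat.add_sub_cancel' (Nat.le_of_lt_succ (mem_range.mp hj)), Nat.add_sub_cancel_left,
      coeff_mul_X_pow]
  simp only [shiftedJacobi, finsetSum_coeff, coeff_C_mul]
  rw [sum_congr rfl fun j hj => by rw [hlead j hj, mul_one], sum_genBinom_mul_genBinom]
  ring_nf

lemma jacobiP_eq_sum_coeff_shiftedJacobi (k : ℕ) (a b x : ℝ) :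
    jacobiP k a b (2 * x - 1) = ∑ j ∈ range (k + 1), (shiftedJacobi k a b).coeff j * x ^ j := by
  rw [← eval_shiftedJacobi,
    eval_eq_sum_range' (Nat.lt_succ_of_le (natDegree_shiftedJacobi_le k a b))]

lemma sum_alternating_choose_mul_choose_of_le (m p j : ℕ) (hj : j ≤ p) :
    ∑ i ∈ range (p + 1), (-1 : ℝ) ^ i * (p + m).choose i * (m + j + (p - i)).choose (m + j)
      = if j = p then 1 else 0 := by
  have hext :
      ∑ i ∈ range (p + 1), (-1 : ℝ) ^ i * (p + m).choose i * (m + j + (p - i)).choose (m + j)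
        = ∑ i ∈ range (p + m + 1),
            (-1 : ℝ) ^ i * (p + m).choose i * (p + m + j - i).choose (m + j) := by
    refine sum_subset_zero_on_sdiff (range_subset_range.mpr (by omega)) (fun i hi => ?_)
      (fun i hi => ?_)
    · simp only [mem_sdiff, mem_range] at hi
      rw [Nat.choose_eq_zero_of_lt (by omega : p + m + j - i < m + j)]
      simp
    · rw [show m + j + (p - i) = p + m + j - i by have := mem_range.mp hi; omega]
  rw [hext, sum_range_alternating_choose_mul_choose]
  by_cases hjp : j = p
  · subst hjp
    rw [if_pos (by omega), if_pos rfl, show m + j - (j + m) = 0 by omega]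
    simp
  · rw [if_neg (by omega), if_neg hjp]

lemma mul_jacobiP_eq_sum (α : ℝ) (m p n : ℕ) {ρ : ℝ} (hρ : 1 - ρ ^ 2 ≠ 0) :
    ρ ^ (2 * n + 1) * (1 - ρ ^ 2) ^ α * jacobiP p α m (2 * ρ ^ 2 - 1)
      = ∑ i ∈ range (p + 1), genBinom (p + α) (p - i) * (p + m).choose i * (-1) ^ i
          * (ρ ^ (2 * (n + (p - i)) + 1) * (1 - ρ ^ 2) ^ (α + i)) := by
  rw [jacobiP, mul_sum]
  refine sum_congr rfl fun i _ => ?_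
  rw [show (2 * ρ ^ 2 - 1 - 1) / 2 = -(1 - ρ ^ 2) by ring,
    show (2 * ρ ^ 2 - 1 + 1) / 2 = ρ ^ 2 by ring, neg_pow, rpow_add_natCast hρ,
    show (p : ℝ) + m = ((p + m : ℕ) : ℝ) by push_cast; ring, genBinom_natCast]
  ring

lemma genBinom_mul_integral_pow_mul_one_sub_sq_rpow {α : ℝ} (hα : -1 < α) (n : ℕ) {i p : ℕ}
    (hip : i ≤ p) :
    genBinom (p + α) (p - i) * ∫ ρ in (0:ℝ)..1, ρ ^ (2 * (n + (p - i)) + 1) * (1 - ρ ^ 2) ^ (α + i)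
      = Gamma (p + α + 1) * n ! / (2 * Gamma (n + p + α + 2)) * (n + (p - i)).choose n := by
  have hx : 0 < α + i + 1 := by linarith [(Nat.cast_nonneg i : (0:ℝ) ≤ i)]
  have hGamma := genBinom_mul_Gamma hx (p - i)
  rw [Nat.cast_sub hip, show α + i + 1 + (p - i) - 1 = p + α by ring,
    show α + i + 1 + (p - i) = p + α + 1 by ring, eq_div_iff (by positivity)] at hGamma
  have hfact := Nat.choose_mul_factorial_mul_factorial (Nat.le_add_right n (p - i))
  rw [Nat.add_sub_cancel_left] at hfact
  rw [integral_pow_mul_one_sub_sq_rpow _ (by linarith), ← hfact,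
    show ((n + (p - i) : ℕ) : ℝ) + (α + i) + 2 = n + p + α + 2 by
      push_cast [Nat.cast_sub hip]; ring]
  push_cast
  linear_combination ((n + (p - i)).choose n * n ! / (2 * Gamma (n + p + α + 2)) : ℝ) * hGamma

lemma integral_jacobiP_moment {α : ℝ} (hα : -1 < α) (m p j : ℕ) (hj : j ≤ p) :
    ∫ ρ in (0:ℝ)..1, ρ ^ (2 * (m + j) + 1) * (1 - ρ ^ 2) ^ α * jacobiP p α m (2 * ρ ^ 2 - 1)
      = if j = p then Gamma (p + α + 1) * (m + p)! / (2 * Gamma (m + 2 * p + α + 2)) else 0 := by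
  have hαi : ∀ i : ℕ, -1 < α + i := fun i => by linarith [(Nat.cast_nonneg i : (0:ℝ) ≤ i)]
  calc ∫ ρ in (0:ℝ)..1, ρ ^ (2 * (m + j) + 1) * (1 - ρ ^ 2) ^ α * jacobiP p α m (2 * ρ ^ 2 - 1)
      = ∫ ρ in (0:ℝ)..1, ∑ i ∈ range (p + 1), genBinom (p + α) (p - i) * (p + m).choose i
          * (-1) ^ i * (ρ ^ (2 * (m + j + (p - i)) + 1) * (1 - ρ ^ 2) ^ (α + i)) :=
        intervalIntegral.integral_congr_Ioo_of_le zero_le_one fun ρ hρ =>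
          mul_jacobiP_eq_sum α m p (m + j) (by nlinarith [hρ.1, hρ.2])
    _ = Gamma (p + α + 1) * (m + j)! / (2 * Gamma ((m + j : ℕ) + p + α + 2))
          * ∑ i ∈ range (p + 1),
              (-1 : ℝ) ^ i * (p + m).choose i * (m + j + (p - i)).choose (m + j) := by
        rw [intervalIntegral.integral_finsetSum fun i _ =>
          (intervalIntegrable_pow_mul_one_sub_sq_rpow _ (hαi i)).const_mul _, mul_sum]
        refine sum_congr rfl fun i hi => ?_
        rw [intervalIntegral.integral_const_mul]
        linear_combination ((p + m).choose i * (-1 : ℝ) ^ i) *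
          genBinom_mul_integral_pow_mul_one_sub_sq_rpow hα (m + j)
            (Nat.le_of_lt_succ (mem_range.mp hi))
    _ = _ := by
        rw [sum_alternating_choose_mul_choose_of_le m p j hj]
        split_ifs with hjp
        · subst hjp
          push_cast
          ring_nf
        · exact mul_zero _

lemma N2_eq_genBinom_mul {α : ℝ} (hα : -1 < α) (m p : ℕ) :
    N2 α m p = genBinom (2 * p + α + m) p
      * (Gamma (p + α + 1) * (m + p)! / (2 * Gamma (m + 2 * p + α + 2))) := by
  have hp : (0 : ℝ) ≤ p := Nat.cast_nonneg p
  have hm : (0 : ℝ) ≤ m := Nat.cast_nonneg m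
  have hx : 0 < (p + m + α + 1 : ℝ) := by linarith
  have hy : 0 < (m + 2 * p + α + 1 : ℝ) := by linarith
  have hGamma := genBinom_mul_Gamma hx p
  rw [show (p + m + α + 1 : ℝ) + p - 1 = 2 * p + α + m by ring,
    show (p + m + α + 1 : ℝ) + p = m + 2 * p + α + 1 by ring] at hGamma
  have hG : Gamma (p + m + α + 1) ≠ 0 := (Gamma_pos_of_pos hx).ne'
  have hf : (p ! : ℝ) ≠ 0 := by positivity
  rw [← eq_div_iff hG] at hGamma
  rw [hGamma, N2, pochG, pochG,
    show (m + 2 * p + α + 2 : ℝ) = (m + 2 * p + α + 1) + 1 by ring, Gamma_add_one hy.ne',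
    Gamma_nat_eq_factorial,
    show (p : ℝ) + m + 1 = ((p + m : ℕ) : ℝ) + 1 by push_cast; ring, Gamma_nat_eq_factorial,
    Nat.add_comm m p]
  push_cast
  rw [show (p : ℝ) + 1 + α = p + α + 1 by ring, show (p : ℝ) + m + 1 + α = p + m + α + 1 by ring]
  field_simp

lemma R2_mul_R2_mul_weight_eq_sum (α : ℝ) (m p q : ℕ) {ρ : ℝ} (hρ : 0 < 1 - ρ ^ 2) :
    R2 α m p ρ * R2 α m q ρ * ρ * (1 - ρ ^ 2) ^ (-α)
      = ∑ j ∈ range (q + 1), (shiftedJacobi q α m).coeff j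
          * (ρ ^ (2 * (m + j) + 1) * (1 - ρ ^ 2) ^ α * jacobiP p α m (2 * ρ ^ 2 - 1)) := by
  have hw : (1 - ρ ^ 2) ^ α * (1 - ρ ^ 2) ^ (-α) = 1 := by
    rw [← rpow_add hρ, add_neg_cancel, rpow_zero]
  rw [R2, R2, jacobiP_eq_sum_coeff_shiftedJacobi q α m (ρ ^ 2)]
  simp only [mul_sum, sum_mul]
  refine sum_congr rfl fun j _ => ?_
  linear_combination (ρ ^ m * (1 - ρ ^ 2) ^ α * jacobiP p α m (2 * ρ ^ 2 - 1) * ρ ^ m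
    * (shiftedJacobi q α m).coeff j * (ρ ^ 2) ^ j * ρ) * hw

lemma integral_R2_mul_R2_of_le {α : ℝ} (hα : -1 < α) (m : ℕ) {p q : ℕ} (hqp : q ≤ p) :
    ∫ ρ in (0:ℝ)..1, R2 α m p ρ * R2 α m q ρ * ρ * (1 - ρ ^ 2) ^ (-α)
      = if q = p then N2 α m p else 0 := by
  have hcont : Continuous fun ρ : ℝ => jacobiP p α m (2 * ρ ^ 2 - 1) := by
    simp_rw [← eval_shiftedJacobi]
    fun_prop
  rw [intervalIntegral.integral_congr_Ioo_of_le zero_le_one fun ρ hρ =>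
      R2_mul_R2_mul_weight_eq_sum α m p q (by nlinarith [hρ.1, hρ.2]),
    intervalIntegral.integral_finsetSum fun j _ =>
      ((intervalIntegrable_pow_mul_one_sub_sq_rpow _ hα).mul_continuousOn
        hcont.continuousOn).const_mul _]
  simp_rw [intervalIntegral.integral_const_mul]
  rw [sum_congr rfl fun j hj => by
      rw [integral_jacobiP_moment hα m p j (by have := mem_range.mp hj; omega), mul_ite, mul_zero]]
  rw [sum_ite_eq']
  by_cases hpq : q = p
  · subst hpq
    rw [if_pos (self_mem_range_succ q), if_pos rfl, N2_eq_genBinom_mul hα,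
      coeff_shiftedJacobi_self]
  · rw [if_neg (by rw [mem_range]; omega), if_neg hpq]

/-- orthogonality of the generalized 2D Zernike radial functions. -/
theorem stmt1 (α : ℝ) (hα : -1 < α) (m p₁ p₂ : ℕ) :
    ∫ ρ in (0:ℝ)..1, R2 α m p₁ ρ * R2 α m p₂ ρ * ρ * (1 - ρ ^ 2) ^ (-α)
      = if m + 2 * p₁ = m + 2 * p₂ then N2 α m p₁ else 0 := by
  rcases le_total p₂ p₁ with h | h
  · rw [integral_R2_mul_R2_of_le hα m h]
    exact if_congr (by omega) rfl rfl
  · simp_rw [mul_comm (R2 α m p₁ _) (R2 α m p₂ _)]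
    rw [integral_R2_mul_R2_of_le hα m h]
    by_cases hp : p₁ = p₂
    · subst hp
      simp
    · rw [if_neg hp, if_neg (by omega)]
end

section
/- Let α > −1 be real and l, p, k integers ≥ 0, and n = l + 2p. Then the moment J_{nk}^{l,α} = ∫₀¹ ρ^{l+2k+2} R_n^{l,α}(ρ) dρ vanishes for k = 0, 1, …, p−1, and for k ≥ p it equals (1/2) · k!/((k−p)! p!) · Γ(p+α+1) Γ(k+l+3/2) / Γ(k+l+p+α+5/2). -/
open Real MeasureTheory

/-! Substituting `t = ρ²` turns the moment into `½ ∫₀¹ t^(b+k) (1-t)^α P_p^(α,b)(2t-1) dt` with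
`b = l + 1/2`. Expanding the Jacobi polynomial in powers of `t` and `1 - t` makes every term a Beta
integral, and after the Gamma-function bookkeeping the sum is the `p`-th forward difference of the
rising factorial `x ↦ (x)_k`, which is `k(k-1)⋯(k-p+1) · (x+p)_(k-p)`: it vanishes for `k < p`. -/

open Polynomial Finset fwdDiff
open scoped Nat

section Pochhammer

variable {R : Type*} [CommRing R]

theorem fwdDiff_ascPochhammer_eval_succ (k : ℕ) (x : R) :
    Δ_[1] (fun y ↦ (ascPochhammer R (k + 1)).eval y) x
      = (k + 1) * (ascPochhammer R k).eval (x + 1) := by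
  rw [fwdDiff, ascPochhammer_succ_eval, ascPochhammer_succ_left, eval_mul, eval_comp]
  simp only [eval_X, eval_add, eval_one]
  ring

theorem fwdDiff_iter_ascPochhammer_eval (p k : ℕ) (x : R) :
    (Δ_[1])^[p] (fun y ↦ (ascPochhammer R k).eval y) x
      = (descPochhammer R p).eval (k : R) * (ascPochhammer R (k - p)).eval (x + p) := by
  induction p generalizing k x with
  | zero => simp
  | succ p ih =>
    rw [Function.iterate_succ_apply]
    cases k with
    | zero => simp [descPochhammer_succ_left, fwdDiff_iter_eq_sum_shift]
    | succ k =>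
      have hΔ : Δ_[1] (fun y ↦ (ascPochhammer R (k + 1)).eval y)
          = (k + 1 : R) • fun y ↦ (ascPochhammer R k).eval (y + 1) :=
        funext (fwdDiff_ascPochhammer_eval_succ k)
      rw [hΔ, fwdDiff_iter_const_smul, Pi.smul_apply,
        fwdDiff_iter_comp_add (f := fun y ↦ (ascPochhammer R k).eval y), ih,
        descPochhammer_succ_left, eval_mul, eval_comp, Nat.succ_sub_succ]
      simp only [eval_X, eval_sub, eval_one, Nat.cast_succ, smul_eq_mul]
      ring_nf

theorem sum_alternating_choose_mul_ascPochhammer_eval (p k : ℕ) (c : R) :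
    ∑ j ∈ range (p + 1), (-1) ^ j * (p.choose j : R) * (ascPochhammer R k).eval (c - j)
      = (descPochhammer R p).eval (k : R) * (ascPochhammer R (k - p)).eval c := by
  rw [← sub_add_cancel c (p : R), ← fwdDiff_iter_ascPochhammer_eval, fwdDiff_iter_eq_sum_shift,
    ← sum_range_reflect]
  refine sum_congr rfl fun j hj ↦ ?_
  have hj : j ≤ p := Nat.lt_succ_iff.mp (mem_range.mp hj)
  rw [Nat.add_sub_cancel, Nat.choose_symm hj, zsmul_eq_mul, nsmul_eq_mul, Nat.cast_sub hj]
  push_cast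
  ring_nf

end Pochhammer

theorem Real.Gamma_add_natCast_eq_ascPochhammer_mul {x : ℝ} (hx : 0 < x) (n : ℕ) :
    Real.Gamma (x + n) = (ascPochhammer ℝ n).eval x * Real.Gamma x := by
  induction n with
  | zero => simp
  | succ n ih =>
    rw [Nat.cast_succ, ← add_assoc, Real.Gamma_add_one (by positivity), ih, ascPochhammer_succ_eval]
    ring

theorem genBinom_eq_descPochhammer_eval_div (a : ℝ) (n : ℕ) :
    genBinom a n = (descPochhammer ℝ n).eval a / n ! := by
  rw [genBinom, descPochhammer_eval_eq_prod_range]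

theorem genBinom_mul_Gamma_s2 {a : ℝ} {n : ℕ} (h : 0 < a - n + 1) :
    genBinom a n * Real.Gamma (a - n + 1) = Real.Gamma (a + 1) / n ! := by
  have hΓ := Real.Gamma_add_natCast_eq_ascPochhammer_mul h n
  rw [show a - n + 1 + n = a + 1 by ring, ← descPochhammer_eval_eq_ascPochhammer] at hΓ
  rw [genBinom_eq_descPochhammer_eval_div, hΓ, div_mul_eq_mul_div]

theorem Real.rpow_add_natCast_of_neg_one_lt {x y : ℝ} (hx : 0 ≤ x) (hy : -1 < y) (n : ℕ) :
    x ^ (y + n) = x ^ y * x ^ n := by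
  rcases Nat.eq_zero_or_pos n with rfl | hn
  · simp
  · have : (1 : ℝ) ≤ n := Nat.one_le_cast.mpr hn
    exact Real.rpow_add_natCast' hx (by linarith)

theorem Real.sq_rpow_natCast_add_half {x : ℝ} (hx : 0 ≤ x) (n : ℕ) :
    (x ^ 2) ^ ((n : ℝ) + 1 / 2) = x ^ (2 * n + 1) := by
  rw [← Real.rpow_natCast x 2, ← Real.rpow_mul hx, ← Real.rpow_natCast]
  push_cast
  ring_nf

theorem integral_rpow_mul_one_sub_rpow {a b : ℝ} (ha : -1 < a) (hb : -1 < b) :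
    ∫ t in (0:ℝ)..1, t ^ a * (1 - t) ^ b
      = Real.Gamma (a + 1) * Real.Gamma (b + 1) / Real.Gamma (a + b + 2) := by
  have hβ := Complex.betaIntegral_eq_Gamma_mul_div (a + 1) (b + 1) (by simp; linarith)
    (by simp; linarith)
  have hint : Complex.betaIntegral (a + 1) (b + 1)
      = ((∫ t in (0:ℝ)..1, t ^ a * (1 - t) ^ b : ℝ) : ℂ) := by
    rw [Complex.betaIntegral, ← intervalIntegral.integral_ofReal]
    refine intervalIntegral.integral_congr fun t ht ↦ ?_
    rw [Set.uIcc_of_le zero_le_one] at ht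
    push_cast
    rw [Complex.ofReal_cpow ht.1, Complex.ofReal_cpow (sub_nonneg.mpr ht.2)]
    push_cast
    ring_nf
  rw [hint, show (a : ℂ) + 1 + (b + 1) = ((a + b + 2 : ℝ) : ℂ) by push_cast; ring] at hβ
  rw [← Complex.ofReal_one, ← Complex.ofReal_add, ← Complex.ofReal_add, Complex.Gamma_ofReal,
    Complex.Gamma_ofReal, Complex.Gamma_ofReal] at hβ
  exact_mod_cast hβ

theorem intervalIntegrable_rpow_mul_one_sub_rpow {a b : ℝ} (ha : -1 < a) (hb : -1 < b) :
    IntervalIntegrable (fun t : ℝ ↦ t ^ a * (1 - t) ^ b) volume 0 1 := by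
  -- a non-integrable function has interval integral `0`, while the Beta value is positive
  refine intervalIntegral.intervalIntegrable_of_integral_ne_zero ?_
  rw [integral_rpow_mul_one_sub_rpow ha hb]
  have := Real.Gamma_pos_of_pos (s := a + 1) (by linarith)
  have := Real.Gamma_pos_of_pos (s := b + 1) (by linarith)
  have := Real.Gamma_pos_of_pos (s := a + b + 2) (by linarith)
  positivity

theorem integral_two_mul_mul_comp_sq (g : ℝ → ℝ) {a : ℝ} (ha : 0 ≤ a) :
    ∫ x in (0:ℝ)..a, 2 * x * g (x ^ 2) = ∫ t in (0:ℝ)..a ^ 2, g t := by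
  have himage : (· ^ 2) '' Set.Ioc (0:ℝ) a = Set.Ioc 0 (a ^ 2) := by
    ext t
    constructor
    · rintro ⟨x, ⟨hx0, hxa⟩, rfl⟩
      exact ⟨by positivity, pow_le_pow_left₀ hx0.le hxa 2⟩
    · rintro ⟨ht0, hta⟩
      exact ⟨√t, ⟨Real.sqrt_pos.mpr ht0, (Real.sqrt_le_left ha).mpr hta⟩, Real.sq_sqrt ht0.le⟩
  have hderiv : ∀ x ∈ Set.Ioc (0:ℝ) a, HasDerivWithinAt (· ^ 2) (2 * x) (Set.Ioc 0 a) x :=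
    fun x _ ↦ by simpa using (hasDerivAt_pow 2 x).hasDerivWithinAt
  have hinj : Set.InjOn (· ^ 2 : ℝ → ℝ) (Set.Ioc 0 a) :=
    fun x hx y hy h ↦ (pow_left_inj₀ hx.1.le hy.1.le two_ne_zero).mp h
  rw [intervalIntegral.integral_of_le ha, intervalIntegral.integral_of_le (by positivity),
    ← himage, integral_image_eq_integral_abs_deriv_smul measurableSet_Ioc hderiv hinj]
  refine setIntegral_congr_fun measurableSet_Ioc fun x hx ↦ ?_
  simp [abs_of_pos hx.1]

theorem jacobiP_two_mul_sub_one (p : ℕ) (a b t : ℝ) :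
    jacobiP p a b (2 * t - 1) = ∑ j ∈ range (p + 1),
      (-1) ^ j * (genBinom (p + a) (p - j) * genBinom (p + b) j) * (t ^ (p - j) * (1 - t) ^ j) := by
  refine sum_congr rfl fun j _ ↦ ?_
  rw [show (2 * t - 1 - 1) / 2 = -(1 - t) by ring, show (2 * t - 1 + 1) / 2 = t by ring, neg_pow]
  ring

theorem genBinom_mul_genBinom_mul_beta {a b : ℝ} (ha : -1 < a) (hb : -1 < b) {p j : ℕ}
    (hj : j ≤ p) (k : ℕ) :
    genBinom (p + a) (p - j) * genBinom (p + b) j *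
        (Real.Gamma (b + k + (p - j : ℕ) + 1) * Real.Gamma (a + j + 1)
          / Real.Gamma (b + k + (p - j : ℕ) + (a + j) + 2))
      = Real.Gamma (p + a + 1) * Real.Gamma (p + b + 1) / (p ! * Real.Gamma (b + k + p + a + 2))
        * (p.choose j * (ascPochhammer ℝ k).eval (p + b + 1 - j)) := by
  have hc : 0 < (p : ℝ) + b + 1 - j := by
    have : (j : ℝ) ≤ p := by exact_mod_cast hj
    linarith
  have hA := genBinom_mul_Gamma_s2 (a := p + a) (n := p - j) (by push_cast [Nat.cast_sub hj]; linarith)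
  have hB := genBinom_mul_Gamma_s2 (a := p + b) (n := j) (by linarith)
  have hΓ := Real.Gamma_add_natCast_eq_ascPochhammer_mul hc k
  rw [Nat.cast_sub hj] at hA ⊢
  rw [show (p : ℝ) + a - (p - j) + 1 = a + j + 1 by ring] at hA
  rw [show (p : ℝ) + b - j + 1 = p + b + 1 - j by ring] at hB
  rw [show b + k + (p - j) + 1 = (p : ℝ) + b + 1 - j + k by ring, hΓ,
    show b + k + (p - j) + (a + j) + 2 = b + k + p + a + 2 by ring, Nat.cast_choose ℝ hj]
  have hD : Real.Gamma (b + k + p + a + 2) ≠ 0 :=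
    (Real.Gamma_pos_of_pos (by linarith [(Nat.cast_nonneg k : (0 : ℝ) ≤ k),
      (Nat.cast_nonneg p : (0 : ℝ) ≤ p)])).ne'
  calc _ = genBinom (p + a) (p - j) * Real.Gamma (a + j + 1)
        * (genBinom (p + b) j * Real.Gamma (p + b + 1 - j))
        * (ascPochhammer ℝ k).eval (p + b + 1 - j) / Real.Gamma (b + k + p + a + 2) := by ring
    _ = _ := by
      rw [hA, hB]
      field_simp

theorem integral_rpow_mul_one_sub_rpow_mul_jacobiP {a b : ℝ} (ha : -1 < a) (hb : -1 < b)
    (p k : ℕ) :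
    ∫ t in (0:ℝ)..1, t ^ (b + k) * (1 - t) ^ a * jacobiP p a b (2 * t - 1)
      = Real.Gamma (p + a + 1) * Real.Gamma (p + b + 1) / (p ! * Real.Gamma (b + k + p + a + 2))
        * ((descPochhammer ℝ p).eval (k : ℝ) * (ascPochhammer ℝ (k - p)).eval (p + b + 1)) := by
  set C : ℕ → ℝ := fun j ↦ (-1) ^ j * (genBinom (p + a) (p - j) * genBinom (p + b) j)
  have hbk : -1 < b + k := by linarith [(Nat.cast_nonneg k : (0 : ℝ) ≤ k)]
  have hexp₁ (j : ℕ) : -1 < b + k + (p - j : ℕ) := by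
    linarith [(Nat.cast_nonneg (p - j) : (0 : ℝ) ≤ (p - j : ℕ))]
  have hexp₂ (j : ℕ) : -1 < a + j := by linarith [(Nat.cast_nonneg j : (0 : ℝ) ≤ j)]
  have hexpand : ∀ t ∈ Set.uIcc (0:ℝ) 1,
      t ^ (b + k) * (1 - t) ^ a * jacobiP p a b (2 * t - 1)
        = ∑ j ∈ range (p + 1), C j * (t ^ (b + k + (p - j : ℕ)) * (1 - t) ^ (a + j)) := by
    intro t ht
    rw [Set.uIcc_of_le zero_le_one] at ht
    rw [jacobiP_two_mul_sub_one, mul_sum]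
    refine sum_congr rfl fun j _ ↦ ?_
    rw [Real.rpow_add_natCast_of_neg_one_lt ht.1 hbk,
      Real.rpow_add_natCast_of_neg_one_lt (sub_nonneg.mpr ht.2) ha]
    ring
  have hint : ∀ j ∈ range (p + 1), IntervalIntegrable
      (fun t : ℝ ↦ C j * (t ^ (b + k + (p - j : ℕ)) * (1 - t) ^ (a + j))) volume 0 1 :=
    fun j _ ↦ (intervalIntegrable_rpow_mul_one_sub_rpow (hexp₁ j) (hexp₂ j)).const_mul _
  rw [intervalIntegral.integral_congr hexpand, intervalIntegral.integral_finsetSum hint,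
    ← sum_alternating_choose_mul_ascPochhammer_eval, mul_sum]
  refine sum_congr rfl fun j hj ↦ ?_
  rw [intervalIntegral.integral_const_mul, integral_rpow_mul_one_sub_rpow (hexp₁ j) (hexp₂ j),
    mul_assoc, genBinom_mul_genBinom_mul_beta ha hb (Nat.lt_succ_iff.mp (mem_range.mp hj))]
  ring

theorem integral_pow_mul_R3 (α : ℝ) (l p k : ℕ) :
    ∫ ρ in (0:ℝ)..1, ρ ^ (l + 2 * k + 2) * R3 α l p ρ
      = 1 / 2 * ∫ t in (0:ℝ)..1, t ^ (((l : ℝ) + 1 / 2) + k) * (1 - t) ^ α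
          * jacobiP p α ((l : ℝ) + 1 / 2) (2 * t - 1) := by
  have hsubst := integral_two_mul_mul_comp_sq (fun t ↦ t ^ (((l : ℝ) + 1 / 2) + k) * (1 - t) ^ α
    * jacobiP p α ((l : ℝ) + 1 / 2) (2 * t - 1)) zero_le_one
  rw [one_pow] at hsubst
  rw [← hsubst, ← intervalIntegral.integral_const_mul]
  refine intervalIntegral.integral_congr fun ρ hρ ↦ ?_
  rw [Set.uIcc_of_le zero_le_one] at hρ
  rw [show ((l : ℝ) + 1 / 2) + k = ((l + k : ℕ) : ℝ) + 1 / 2 by push_cast; ring,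
    Real.sq_rpow_natCast_add_half hρ.1, R3]
  ring

/-- the moments `J_{nk}^{l,α} = ∫₀¹ ρ^{l+2k+2} R_n^{l,α}(ρ) dρ`, `n = l + 2p`. -/
theorem stmt2 (α : ℝ) (hα : -1 < α) (l p k : ℕ) :
    (k < p → ∫ ρ in (0:ℝ)..1, ρ ^ (l + 2 * k + 2) * R3 α l p ρ = 0) ∧
    (p ≤ k → ∫ ρ in (0:ℝ)..1, ρ ^ (l + 2 * k + 2) * R3 α l p ρ
      = 1 / 2 * ((Nat.factorial k : ℝ) / ((Nat.factorial (k - p) : ℝ) * (Nat.factorial p : ℝ)))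
        * Real.Gamma ((p : ℝ) + α + 1) * Real.Gamma ((k : ℝ) + (l : ℝ) + 3 / 2)
        / Real.Gamma ((k : ℝ) + (l : ℝ) + (p : ℝ) + α + 5 / 2)) := by
  have hl : (-1 : ℝ) < l + 1 / 2 := by linarith [(Nat.cast_nonneg l : (0 : ℝ) ≤ l)]
  rw [integral_pow_mul_R3, integral_rpow_mul_one_sub_rpow_mul_jacobiP hα hl]
  refine ⟨fun hkp ↦ by rw [descPochhammer_eval_coe_nat_of_lt hkp]; ring, fun hpk ↦ ?_⟩
  have hdesc : (k.descFactorial p : ℝ) * (k - p)! = k ! := by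
    exact_mod_cast (mul_comm _ _).trans (Nat.factorial_mul_descFactorial hpk)
  have hΓ := Real.Gamma_add_natCast_eq_ascPochhammer_mul (x := p + (l + 1 / 2) + 1) (by positivity)
    (k - p)
  rw [Nat.cast_sub hpk, show (p : ℝ) + (l + 1 / 2) + 1 + (k - p) = k + l + 3 / 2 by ring] at hΓ
  rw [descPochhammer_eval_eq_descFactorial, ← hdesc, hΓ,
    show (l : ℝ) + 1 / 2 + k + p + α + 2 = k + l + p + α + 5 / 2 by ring]
  field_simp
end

section
/- Let α > −1 be real and define, for integers n, l ≥ 0 and 0 ≤ ρ ≤ 1, I_{nl}^{α}(ρ) = (1/2) ∫_{−1}^{1} C_n^{α+3/2}(ρt) P_l(t) dt, with the convention I_{−1,l}^{α} = 0. Then for all integers n, l ≥ 0 with n + 1 − l even and nonnegative, I_{n+1,l}^{α}(ρ) = ((n+α+3/2)/(n+1)) · ρ · [ ((l+1)/(l+1/2)) I_{n,l+1}^{α}(ρ) + (l/(l+1/2)) I_{n,l−1}^{α}(ρ) ] − ((n+2α+2)/(n+1)) I_{n−1,l}^{α}(ρ). -/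
open Real MeasureTheory

/-- `I_{nl}^α(ρ) = ½ ∫_{−1}^1 C_n^{α+3/2}(ρt) P_l(t) dt`, with the convention `I_{−1,l}^α = 0`. -/
noncomputable def Ifun (α : ℝ) (n : ℤ) (l : ℕ) (ρ : ℝ) : ℝ :=
  if n < 0 then 0
  else 1 / 2 * ∫ t in (-1:ℝ)..1, gegenbauer n.toNat (α + 3 / 2) (ρ * t) * legendreFun l t


/-!
Both factors of the integrand satisfy three-term recurrences,
`(n+1) C_{n+1}^λ(x) = 2(n+λ) x C_n^λ(x) - (n+2λ-1) C_{n-1}^λ(x)` and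
`(2l+1) t P_l(t) = (l+1) P_{l+1}(t) + l P_{l-1}(t)`. Substituting the first at `x = ρt` under
the integral, and then the second in the term carrying the factor `t`, gives the recursion for
`λ = α + 3/2`. The Gegenbauer recurrence is an identity between the coefficients of the explicit
sum. For the Legendre recurrence, `P_l` is the binary form `∑ (l choose k)² u^(l-k) v^k` in
`u = (x-1)/2`, `v = (x+1)/2`; since `x = u + v` and `1 = v - u`, it becomes a three-term
identity between squared binomial coefficients.
-/

open Finset

namespace Real

/-- Also true at the poles of `Γ`, where Mathlib sets `Γ = 0`. -/
lemma inv_Gamma_eq_mul_inv_Gamma_add_one (s : ℝ) : (Gamma s)⁻¹ = s * (Gamma (s + 1))⁻¹ := by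
  rcases eq_or_ne s 0 with rfl | hs
  · simp
  · rw [Gamma_add_one hs, mul_inv, ← mul_assoc, mul_inv_cancel₀ hs, one_mul]

end Real

section Gegenbauer

variable {lam : ℝ}

/- Writing `Γ(n - 2k + 1)⁻¹` instead of `1 / (n - 2k)!` makes the coefficient vanish for
`2k > n` (poles of `Γ`), so `C_n^λ` is a sum over any sufficiently long range of `k`. -/
noncomputable def gegenbauerCoeff (lam : ℝ) (n k : ℕ) : ℝ :=
  (-1) ^ k * Real.Gamma ((n : ℝ) - k + lam) / (Real.Gamma lam * k.factorial) *
    (Real.Gamma ((n : ℝ) - 2 * k + 1))⁻¹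

lemma gegenbauerCoeff_eq_zero {n k : ℕ} (h : n < 2 * k) : gegenbauerCoeff lam n k = 0 := by
  have : (n : ℝ) - 2 * k + 1 = -((2 * k - n - 1 : ℕ) : ℝ) := by
    rw [Nat.cast_sub (by omega), Nat.cast_sub (by omega)]; push_cast; ring
  rw [gegenbauerCoeff, this, Real.Gamma_neg_nat_eq_zero, inv_zero, mul_zero]

lemma gegenbauer_eq_sum {N : ℕ} (n : ℕ) (hN : n / 2 < N) (x : ℝ) :
    gegenbauer n lam x = ∑ k ∈ range N, gegenbauerCoeff lam n k * (2 * x) ^ (n - 2 * k) := by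
  rw [gegenbauer, ← sum_subset (range_subset_range.2 hN) fun k _ hk => by
    rw [gegenbauerCoeff_eq_zero (by simp at hk; omega), zero_mul]]
  refine sum_congr rfl fun k hk => ?_
  have hk : 2 * k ≤ n := by simp at hk; omega
  have hfac : Real.Gamma ((n : ℝ) - 2 * k + 1) = (n - 2 * k).factorial := by
    rw [← Real.Gamma_nat_eq_factorial, Nat.cast_sub hk]; push_cast; ring_nf
  rw [gegenbauerCoeff, hfac, Nat.cast_sub (by omega : k ≤ n)]
  field_simp

lemma gegenbauerCoeff_mul_pow_mul (n k : ℕ) (y : ℝ) :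
    gegenbauerCoeff lam n k * y ^ (n - 2 * k) * y
      = gegenbauerCoeff lam n k * y ^ (n + 1 - 2 * k) := by
  rcases lt_or_ge n (2 * k) with h | h
  · simp [gegenbauerCoeff_eq_zero h]
  · rw [mul_assoc, ← pow_succ, Nat.sub_add_comm h]

lemma gegenbauerCoeff_succ_zero (hlam : 0 < lam) (n : ℕ) :
    ((n : ℝ) + 1) * gegenbauerCoeff lam (n + 1) 0
      = ((n : ℝ) + lam) * gegenbauerCoeff lam n 0 := by
  have hpos : (0 : ℝ) < n + lam := by positivity
  simp only [gegenbauerCoeff, pow_zero, Nat.factorial_zero, Nat.cast_zero, mul_zero, sub_zero,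
    one_mul, Nat.cast_succ]
  rw [add_right_comm, Real.Gamma_add_one hpos.ne',
    Real.inv_Gamma_eq_mul_inv_Gamma_add_one (n + 1)]
  ring

lemma gegenbauerCoeff_succ_succ (hlam : 0 < lam) (n k : ℕ) :
    ((n : ℝ) + 2) * gegenbauerCoeff lam (n + 2) (k + 1)
      = ((n : ℝ) + 1 + lam) * gegenbauerCoeff lam (n + 1) (k + 1)
        - ((n : ℝ) + 2 * lam) * gegenbauerCoeff lam n k := by
  rcases lt_or_ge n (2 * k) with h | h
  · simp [gegenbauerCoeff_eq_zero h, gegenbauerCoeff_eq_zero (by omega : n + 1 < 2 * (k + 1)),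
      gegenbauerCoeff_eq_zero (by omega : n + 2 < 2 * (k + 1))]
  have hpos : (0 : ℝ) < n - k + lam := by
    have : (k : ℝ) ≤ n := by exact_mod_cast (by omega : k ≤ n)
    linarith
  have hG : Real.Gamma ((n : ℝ) - k + lam + 1) = (n - k + lam) * Real.Gamma (n - k + lam) :=
    Real.Gamma_add_one hpos.ne'
  have hR := Real.inv_Gamma_eq_mul_inv_Gamma_add_one ((n : ℝ) - 2 * k)
  simp only [gegenbauerCoeff, Nat.factorial_succ, pow_succ]
  push_cast
  rw [show (n : ℝ) + 2 - (k + 1) + lam = n - k + lam + 1 by ring,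
    show (n : ℝ) + 1 - (k + 1) + lam = n - k + lam by ring,
    show (n : ℝ) + 2 - 2 * (k + 1) + 1 = n - 2 * k + 1 by ring,
    show (n : ℝ) + 1 - 2 * (k + 1) + 1 = n - 2 * k by ring, hG, hR]
  field_simp
  ring

theorem gegenbauer_succ_succ (hlam : 0 < lam) (n : ℕ) (x : ℝ) :
    ((n : ℝ) + 2) * gegenbauer (n + 2) lam x
      = 2 * ((n : ℝ) + 1 + lam) * x * gegenbauer (n + 1) lam x
        - ((n : ℝ) + 2 * lam) * gegenbauer n lam x := by
  rw [gegenbauer_eq_sum (N := n + 3) _ (by omega), gegenbauer_eq_sum (N := n + 3) _ (by omega),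
    gegenbauer_eq_sum (N := n + 2) _ (by omega), sum_range_succ' _ (n + 2),
    sum_range_succ' _ (n + 2), mul_add, mul_sum, mul_add, mul_sum, mul_sum]
  have hterm : ∀ k ∈ range (n + 2),
      ((n : ℝ) + 2) * (gegenbauerCoeff lam (n + 2) (k + 1) * (2 * x) ^ (n + 2 - 2 * (k + 1)))
        = 2 * ((n : ℝ) + 1 + lam) * x *
            (gegenbauerCoeff lam (n + 1) (k + 1) * (2 * x) ^ (n + 1 - 2 * (k + 1)))
          - ((n : ℝ) + 2 * lam) * (gegenbauerCoeff lam n k * (2 * x) ^ (n - 2 * k)) :=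
    fun k _ => by
      have h := gegenbauerCoeff_mul_pow_mul (lam := lam) (n + 1) (k + 1) (2 * x)
      rw [show n + 1 + 1 - 2 * (k + 1) = n - 2 * k by omega] at h
      rw [show n + 2 - 2 * (k + 1) = n - 2 * k by omega]
      linear_combination
        (2 * x) ^ (n - 2 * k) * gegenbauerCoeff_succ_succ hlam n k - (n + 1 + lam) * h
  have htop := gegenbauerCoeff_succ_zero hlam (n + 1)
  push_cast at htop
  rw [sum_congr rfl hterm, sum_sub_distrib]
  simp only [mul_zero, Nat.sub_zero]
  linear_combination (2 * x) ^ (n + 2) * htop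

lemma gegenbauer_zero (hlam : 0 < lam) (x : ℝ) : gegenbauer 0 lam x = 1 := by
  simp [gegenbauer, (Real.Gamma_pos_of_pos hlam).ne']

lemma gegenbauer_one (hlam : 0 < lam) (x : ℝ) : gegenbauer 1 lam x = 2 * lam * x := by
  simp only [gegenbauer, Nat.reduceDiv, zero_add, range_one, sum_singleton]
  rw [Nat.cast_one, add_comm, Real.Gamma_add_one hlam.ne']
  field_simp [(Real.Gamma_pos_of_pos hlam).ne']
  simp

noncomputable def gegenbauerInt (lam : ℝ) (n : ℤ) (x : ℝ) : ℝ :=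
  if n < 0 then 0 else gegenbauer n.toNat lam x

@[simp]
lemma gegenbauerInt_natCast (n : ℕ) (x : ℝ) : gegenbauerInt lam n x = gegenbauer n lam x := by
  simp [gegenbauerInt]

@[fun_prop]
lemma continuous_gegenbauerInt (lam : ℝ) (n : ℤ) : Continuous (gegenbauerInt lam n) := by
  unfold gegenbauerInt gegenbauer
  split_ifs <;> fun_prop

theorem gegenbauerInt_recurrence (hlam : 0 < lam) (n : ℕ) (x : ℝ) :
    ((n : ℝ) + 1) * gegenbauerInt lam ((n : ℤ) + 1) x
      = 2 * ((n : ℝ) + lam) * x * gegenbauerInt lam n x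
        - ((n : ℝ) + 2 * lam - 1) * gegenbauerInt lam ((n : ℤ) - 1) x := by
  rcases n with _ | n
  · simp [gegenbauerInt, gegenbauer_zero hlam, gegenbauer_one hlam]
  · rw [show ((n + 1 : ℕ) : ℤ) + 1 = ((n + 2 : ℕ) : ℤ) by push_cast; ring,
      show ((n + 1 : ℕ) : ℤ) - 1 = (n : ℤ) by push_cast; ring]
    simp only [gegenbauerInt_natCast]
    push_cast
    linear_combination gegenbauer_succ_succ hlam n x

end Gegenbauer

section Legendre

noncomputable def intChoose (m : ℕ) (k : ℤ) : ℝ :=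
  if 0 ≤ k then (m.choose k.toNat : ℝ) else 0

@[simp]
lemma intChoose_natCast (m j : ℕ) : intChoose m j = m.choose j := by
  simp [intChoose]

lemma intChoose_of_neg (m : ℕ) {k : ℤ} (hk : k < 0) : intChoose m k = 0 := by
  simp [intChoose, not_le.2 hk]

lemma intChoose_of_lt (m : ℕ) {k : ℤ} (hk : (m : ℤ) < k) : intChoose m k = 0 := by
  lift k to ℕ using by omega
  simp [Nat.choose_eq_zero_of_lt (by omega : m < k)]

lemma intChoose_succ (m : ℕ) (k : ℤ) :
    intChoose (m + 1) k = intChoose m (k - 1) + intChoose m k := by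
  rcases lt_trichotomy k 0 with hk | rfl | hk
  · simp [intChoose_of_neg _ hk, intChoose_of_neg _ (by omega : k - 1 < 0)]
  · simp [intChoose]
  · lift k to ℕ using hk.le
    obtain ⟨j, rfl⟩ : ∃ j, k = j + 1 := ⟨k - 1, by omega⟩
    rw [show ((j + 1 : ℕ) : ℤ) - 1 = j by omega, intChoose_natCast, intChoose_natCast,
      intChoose_natCast, Nat.choose_succ_succ, Nat.cast_add]

lemma mul_intChoose (m : ℕ) (k : ℤ) :
    k * intChoose m k = (m - k + 1) * intChoose m (k - 1) := by
  rcases lt_trichotomy k 0 with hk | rfl | hk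
  · simp [intChoose_of_neg _ hk, intChoose_of_neg _ (by omega : k - 1 < 0)]
  · simp [intChoose]
  · lift k to ℕ using hk.le
    obtain ⟨j, rfl⟩ : ∃ j, k = j + 1 := ⟨k - 1, by omega⟩
    rw [show ((j + 1 : ℕ) : ℤ) - 1 = j by omega, intChoose_natCast, intChoose_natCast]
    rcases le_or_gt j m with hj | hj
    · have h := Nat.choose_succ_right_eq m j
      rw [← Nat.cast_inj (R := ℝ)] at h
      push_cast [hj] at h ⊢
      linear_combination h
    · simp [Nat.choose_eq_zero_of_lt hj, Nat.choose_eq_zero_of_lt (by omega : m < j + 1)]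

/-- With `a, b, c` the binomials `(m choose k-2), (m choose k-1), (m choose k)`, this reduces by
Pascal's rule to `m b² = ab + bc + (m+2)ac`, a consequence of the two ratio relations. -/
lemma intChoose_sq_three_term (m : ℕ) (k : ℤ) :
    (2 * m + 3 : ℝ) * (intChoose (m + 1) k ^ 2 + intChoose (m + 1) (k - 1) ^ 2)
      = (m + 2 : ℝ) * intChoose (m + 2) k ^ 2
        + (m + 1 : ℝ) *
          (intChoose m k ^ 2 - 2 * intChoose m (k - 1) ^ 2 + intChoose m (k - 2) ^ 2) := by
  have h₁ := intChoose_succ m k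
  have h₂ := intChoose_succ m (k - 1)
  have h₃ := intChoose_succ (m + 1) k
  have e₁ := mul_intChoose m k
  have e₂ := mul_intChoose m (k - 1)
  rw [sub_sub, show (1 : ℤ) + 1 = 2 by norm_num] at h₂ e₂
  push_cast at h₁ h₂ h₃ e₁ e₂ ⊢
  rw [h₃, h₁, h₂]
  linear_combination (2 * (intChoose m (k - 1) + intChoose m k)) * e₂
    - (2 * (intChoose m (k - 2) + intChoose m (k - 1))) * e₁

noncomputable def binaryForm (c : ℤ → ℝ) (N : ℕ) (u v : ℝ) : ℝ :=
  ∑ k ∈ range (N + 1), c k * u ^ (N - k) * v ^ k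

lemma linear_mul_binaryForm (a b u v : ℝ) (c : ℤ → ℝ) (N : ℕ) (h₀ : c (-1) = 0)
    (h₁ : c (N + 1) = 0) :
    (a * u + b * v) * binaryForm c N u v
      = binaryForm (fun k => a * c k + b * c (k - 1)) (N + 1) u v := by
  simp only [binaryForm, add_mul, sum_add_distrib]
  rw [sum_range_succ _ (N + 1), sum_range_succ' _ (N + 1), mul_sum, mul_sum]
  push_cast
  simp only [h₀, h₁, mul_zero, zero_mul, add_zero, pow_zero]
  congr 1 <;> refine sum_congr rfl fun k hk => ?_
  · rw [show N + 1 - k = N - k + 1 by simp at hk; omega]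
    ring
  · rw [add_sub_cancel_right]
    ring

lemma legendreFun_eq_binaryForm (l : ℕ) (x : ℝ) :
    legendreFun l x
      = binaryForm (fun k => intChoose l k ^ 2) l ((x - 1) / 2) ((x + 1) / 2) := by
  rw [legendreFun, binaryForm, mul_sum]
  refine sum_congr rfl fun k hk => ?_
  have hpow : (2 : ℝ) ^ l = 2 ^ (l - k) * 2 ^ k := by
    rw [← pow_add, Nat.sub_add_cancel (by simp at hk; omega)]
  rw [intChoose_natCast, div_pow, div_pow, hpow]
  field_simp

theorem legendreFun_succ_succ (m : ℕ) (x : ℝ) :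
    (2 * m + 3 : ℝ) * (x * legendreFun (m + 1) x)
      = (m + 2 : ℝ) * legendreFun (m + 2) x + (m + 1 : ℝ) * legendreFun m x := by
  set u := (x - 1) / 2
  set v := (x + 1) / 2
  have hx : x * legendreFun (m + 1) x = binaryForm
      (fun k => intChoose (m + 1) k ^ 2 + intChoose (m + 1) (k - 1) ^ 2) (m + 2) u v := by
    have := linear_mul_binaryForm 1 1 u v (fun k => intChoose (m + 1) k ^ 2) (m + 1)
      (by simp [intChoose_of_neg]) (by simp [intChoose_of_lt])
    simp only [one_mul] at this
    rw [legendreFun_eq_binaryForm, ← this]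
    ring
  have h1 : legendreFun m x = binaryForm
      (fun k => intChoose m k ^ 2 - 2 * intChoose m (k - 1) ^ 2 + intChoose m (k - 2) ^ 2)
      (m + 2) u v := by
    have h₀ := linear_mul_binaryForm (-1) 1 u v (fun k => intChoose m k ^ 2) m
      (by simp [intChoose_of_neg]) (by simp [intChoose_of_lt])
    have h₁ := linear_mul_binaryForm (-1) 1 u v
      (fun k => -1 * intChoose m k ^ 2 + 1 * intChoose m (k - 1) ^ 2) (m + 1)
      (by simp [intChoose_of_neg]) (by simp [intChoose_of_lt])
    have hone : -1 * u + 1 * v = 1 := by ring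
    rw [legendreFun_eq_binaryForm, ← one_mul (binaryForm _ m u v),
      ← one_mul (binaryForm _ m u v), ← hone, h₀, h₁]
    congr 1
    funext k
    rw [sub_sub, show (1 : ℤ) + 1 = 2 by norm_num]
    ring
  rw [hx, h1, legendreFun_eq_binaryForm]
  simp only [binaryForm, mul_sum, ← sum_add_distrib]
  refine sum_congr rfl fun k _ => ?_
  linear_combination u ^ (m + 2 - k) * v ^ k * intChoose_sq_three_term m k

lemma legendreFun_zero (x : ℝ) : legendreFun 0 x = 1 := by
  simp [legendreFun]

lemma legendreFun_one (x : ℝ) : legendreFun 1 x = x := by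
  simp [legendreFun, sum_range_succ, mul_add, ← div_eq_inv_mul]

theorem legendreFun_recurrence (l : ℕ) (x : ℝ) :
    (2 * l + 1 : ℝ) * (x * legendreFun l x)
      = (l + 1 : ℝ) * legendreFun (l + 1) x + l * legendreFun (l - 1) x := by
  rcases l with _ | m
  · simp [legendreFun_zero, legendreFun_one]
  · push_cast
    linear_combination legendreFun_succ_succ m x

@[fun_prop]
lemma continuous_legendreFun (l : ℕ) : Continuous (legendreFun l) := by
  unfold legendreFun
  fun_prop

end Legendre

theorem integral_mul_legendreFun_recurrence {g : ℝ → ℝ} (hg : Continuous g) (l : ℕ)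
    (a b : ℝ) :
    (2 * l + 1 : ℝ) * ∫ t in a..b, t * g t * legendreFun l t
      = (l + 1 : ℝ) * (∫ t in a..b, g t * legendreFun (l + 1) t)
        + l * ∫ t in a..b, g t * legendreFun (l - 1) t := by
  have hint : ∀ j, IntervalIntegrable (fun t => g t * legendreFun j t) volume a b := fun j =>
    (hg.mul (continuous_legendreFun j)).intervalIntegrable a b
  rw [← intervalIntegral.integral_const_mul, ← intervalIntegral.integral_const_mul,
    ← intervalIntegral.integral_const_mul, ← intervalIntegral.integral_add
      ((hint _).const_mul _) ((hint _).const_mul _)]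
  refine intervalIntegral.integral_congr fun t _ => ?_
  linear_combination g t * legendreFun_recurrence l t

lemma Ifun_eq_integral (α : ℝ) (n : ℤ) (l : ℕ) (ρ : ℝ) :
    Ifun α n l ρ
      = 1 / 2 * ∫ t in (-1:ℝ)..1, gegenbauerInt (α + 3 / 2) n (ρ * t) * legendreFun l t := by
  unfold Ifun gegenbauerInt
  split_ifs <;> simp

theorem stmt12_general (α : ℝ) (hα : -1 < α) (n l : ℕ) (ρ : ℝ) :
    Ifun α ((n : ℤ) + 1) l ρ
      = ((n : ℝ) + α + 3 / 2) / ((n : ℝ) + 1) * ρ *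
          (((l : ℝ) + 1) / ((l : ℝ) + 1 / 2) * Ifun α (n : ℤ) (l + 1) ρ +
            (l : ℝ) / ((l : ℝ) + 1 / 2) * Ifun α (n : ℤ) (l - 1) ρ)
        - ((n : ℝ) + 2 * α + 2) / ((n : ℝ) + 1) * Ifun α ((n : ℤ) - 1) l ρ := by
  have hlam : 0 < α + 3 / 2 := by linarith
  simp only [Ifun_eq_integral]
  set G := gegenbauerInt (α + 3 / 2)
  have hpoint : ∀ t, G (n + 1) (ρ * t) * legendreFun l t
      = 2 * (n + α + 3 / 2) * ρ / (n + 1) * (t * G n (ρ * t) * legendreFun l t)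
        - (n + 2 * α + 2) / (n + 1) * (G (n - 1) (ρ * t) * legendreFun l t) := fun t => by
    field_simp
    linear_combination legendreFun l t * gegenbauerInt_recurrence hlam n (ρ * t)
  have hleg := integral_mul_legendreFun_recurrence (g := fun t => G n (ρ * t)) (by fun_prop) l
    (-1) 1
  rw [mul_comm, ← eq_div_iff (by positivity)] at hleg
  rw [intervalIntegral.integral_congr fun t _ => hpoint t,
    intervalIntegral.integral_sub (by apply Continuous.intervalIntegrable; fun_prop)
      (by apply Continuous.intervalIntegrable; fun_prop),
    intervalIntegral.integral_const_mul, intervalIntegral.integral_const_mul, hleg]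
  field_simp

/-- the recursion
`I_{n+1,l}^α = ((n+α+3/2)/(n+1)) ρ [((l+1)/(l+1/2)) I_{n,l+1}^α + (l/(l+1/2)) I_{n,l−1}^α]
 − ((n+2α+2)/(n+1)) I_{n−1,l}^α` for `n + 1 − l` even and nonnegative.  (For `l = 0` the term
with index `l − 1` carries the factor `l/(l+1/2) = 0` and may be ignored.) -/
theorem stmt12 (α : ℝ) (hα : -1 < α) (n l : ℕ) (hle : l ≤ n + 1) (hpar : Even (n + 1 - l))
    (ρ : ℝ) (hρ : ρ ∈ Set.Icc (0:ℝ) 1) :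
    Ifun α ((n : ℤ) + 1) l ρ
      = ((n : ℝ) + α + 3 / 2) / ((n : ℝ) + 1) * ρ *
          (((l : ℝ) + 1) / ((l : ℝ) + 1 / 2) * Ifun α (n : ℤ) (l + 1) ρ +
            (l : ℝ) / ((l : ℝ) + 1 / 2) * Ifun α (n : ℤ) (l - 1) ρ)
        - ((n : ℝ) + 2 * α + 2) / ((n : ℝ) + 1) * Ifun α ((n : ℤ) - 1) l ρ :=
  stmt12_general α hα n l ρ
end

section
/- Let δ ≥ 0 be an integer and j an integer ≥ 0. Then for all 0 ≤ ρ ≤ 1, R_{2j}^{0,0}(ρ)(1−ρ²)^{δ} = Σ_i F_{ji}^{δ} R_{2i}^{0,δ}(ρ), where the sum is over all integers i with max(0, j−δ) ≤ i ≤ j, and F_{ji}^{δ} = (−1)^{j−i} ((δ+2i+3/2)/(δ+i+j+3/2)) · C(δ, j−i) · C(i+j+1/2, j) / C(δ+i+j+1/2, j), with C(·,·) generalized binomial coefficients. -/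
open Real MeasureTheory

/-!
Since `(1 - ρ²)^δ` is a common factor, the statement is the connection formula
`P_j^{(0,b)} = ∑ F^δ_{ji} P_i^{(δ,b)}` at `b = 1/2`, proved by induction on `δ`.
The contiguous relation
`(2n+a+b+3) P_{n+1}^{(a,b)} = (n+a+b+2) P_{n+1}^{(a+1,b)} - (n+b+1) P_n^{(a+1,b)}`,
checked coefficientwise in the basis `((x-1)/2)^s ((x+1)/2)^{n+1-s}` with Pascal's rule and
absorption, writes each `P_i^{(δ,b)}` through `P_i^{(δ+1,b)}` and `P_{i-1}^{(δ+1,b)}`.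
Substituting turns the expansion for `δ` into one for `δ + 1`, and in rising-factorial form the
coefficients `F^δ_{ji}` satisfy the resulting two-term recurrence, which again reduces to Pascal's
rule and absorption for `C(δ, ·)`.
-/

open Finset
open scoped Nat

section GenBinom

variable (x : ℝ) (k : ℕ)

theorem genBinom_zero_right : genBinom x 0 = 1 := by
  simp [genBinom]

theorem succ_mul_genBinom_succ : ((k : ℝ) + 1) * genBinom x (k + 1) = (x - k) * genBinom x k := by
  have hk : (k ! : ℝ) ≠ 0 := by positivity
  rw [genBinom, genBinom, prod_range_succ, Nat.factorial_succ]
  push_cast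
  field_simp

theorem succ_mul_genBinom_add_one_succ :
    ((k : ℝ) + 1) * genBinom (x + 1) (k + 1) = (x + 1) * genBinom x k := by
  have hk : (k ! : ℝ) ≠ 0 := by positivity
  rw [genBinom, genBinom, prod_range_succ', Nat.factorial_succ]
  simp only [Nat.cast_succ, Nat.cast_zero, sub_zero, add_sub_add_right_eq_sub, Nat.cast_mul]
  field_simp

theorem genBinom_add_one_succ : genBinom (x + 1) (k + 1) = genBinom x k + genBinom x (k + 1) := by
  have hk : (k : ℝ) + 1 ≠ 0 := by positivity
  apply mul_left_cancel₀ hk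
  linear_combination succ_mul_genBinom_add_one_succ x k - succ_mul_genBinom_succ x k

theorem genBinom_natCast_of_lt {d : ℕ} (h : d < k) : genBinom d k = 0 := by
  rw [genBinom, prod_eq_zero (mem_range.mpr h) (sub_self _), zero_div]

theorem genBinom_add_self : genBinom (x + k) k = pochN (x + 1) k / k ! := by
  rw [genBinom, pochN, ← prod_range_reflect]
  congr 1
  refine prod_congr rfl fun t ht => ?_
  have ht := mem_range.mp ht
  rw [Nat.cast_sub (by omega), Nat.cast_sub (by omega)]
  ring

end GenBinom

section Pochhammer

variable (x : ℝ) (k : ℕ)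

theorem pochN_succ : pochN x (k + 1) = pochN x k * (x + k) :=
  prod_range_succ _ _

theorem pochN_succ' : pochN x (k + 1) = x * pochN (x + 1) k := by
  rw [pochN, pochN, prod_range_succ', mul_comm]
  simp only [Nat.cast_succ, Nat.cast_zero, add_zero, add_assoc, add_comm (1 : ℝ)]

theorem pochN_pos {x : ℝ} (hx : 0 < x) : 0 < pochN x k :=
  prod_pos fun t _ => by positivity

end Pochhammer

section Contiguous

theorem contiguous_coeff_identity {n a b s A₀ A₁ B₀ B₁ : ℝ}
    (hA : (n + 1 - s) * A₀ = (a + s + 1) * A₁) (hB : s * B₀ = (n + 1 + b - s) * B₁) :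
    (2 * n + a + b + 3) * A₀ * (B₀ + B₁)
      = (n + a + b + 2) * (A₀ + A₁) * (B₀ + B₁)
        - (n + 1 + b) * (A₁ * B₀ - A₀ * B₁) := by
  linear_combination (B₀ + B₁) * hA + (A₀ + A₁) * hB

noncomputable def jacobiCoeff (n : ℕ) (a b : ℝ) (s : ℕ) : ℝ :=
  genBinom (n + a) (n - s) * genBinom (n + b) s

theorem jacobiP_eq_sum_jacobiCoeff (n : ℕ) (a b x : ℝ) :
    jacobiP n a b x
      = ∑ s ∈ range (n + 1),
          jacobiCoeff n a b s * (((x - 1) / 2) ^ s * ((x + 1) / 2) ^ (n - s)) := by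
  simp only [jacobiP, jacobiCoeff, mul_assoc]

variable (n : ℕ) (a b : ℝ)

theorem jacobiCoeff_contiguous_zero :
    (2 * n + a + b + 3) * jacobiCoeff (n + 1) a b 0
        - (n + a + b + 2) * jacobiCoeff (n + 1) (a + 1) b 0
      = -((n + 1 + b) * jacobiCoeff n (a + 1) b 0) := by
  have hA : ((n : ℝ) + 1 - 0) * genBinom (n + 1 + a) (n + 1)
      = (a + 0 + 1) * genBinom (n + 1 + a) n := by
    linear_combination succ_mul_genBinom_succ (n + 1 + a) n
  have h := contiguous_coeff_identity (b := b) hA (B₀ := 1) (B₁ := 0) (by ring)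
  simp only [jacobiCoeff, Nat.sub_zero, genBinom_zero_right, Nat.cast_succ]
  rw [show (n : ℝ) + 1 + (a + 1) = n + 1 + a + 1 by ring, genBinom_add_one_succ,
    show (n : ℝ) + (a + 1) = n + 1 + a by ring]
  linear_combination h

theorem jacobiCoeff_contiguous_top :
    (2 * n + a + b + 3) * jacobiCoeff (n + 1) a b (n + 1)
        - (n + a + b + 2) * jacobiCoeff (n + 1) (a + 1) b (n + 1)
      = (n + 1 + b) * jacobiCoeff n (a + 1) b n := by
  have hB : ((n : ℝ) + 1) * genBinom (n + b) (n + 1)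
      = (n + 1 + b - (n + 1)) * genBinom (n + b) n := by
    linear_combination succ_mul_genBinom_succ (n + b) n
  have h := contiguous_coeff_identity (a := a) (A₀ := 1) (A₁ := 0) (by ring) hB
  simp only [jacobiCoeff, Nat.sub_self, genBinom_zero_right, Nat.cast_succ]
  rw [show (n : ℝ) + 1 + b = n + b + 1 by ring, genBinom_add_one_succ]
  linear_combination h

theorem jacobiCoeff_contiguous_mid {s : ℕ} (hs : s < n) :
    (2 * n + a + b + 3) * jacobiCoeff (n + 1) a b (s + 1)
        - (n + a + b + 2) * jacobiCoeff (n + 1) (a + 1) b (s + 1)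
      = -((n + 1 + b) * (jacobiCoeff n (a + 1) b (s + 1) - jacobiCoeff n (a + 1) b s)) := by
  obtain ⟨m, rfl⟩ : ∃ m, n = s + m + 1 := ⟨n - s - 1, by omega⟩
  have hA : ((s + m + 1 : ℕ) + 1 - (s + 1 : ℕ) : ℝ) * genBinom (s + m + 1 + 1 + a) (m + 1)
      = (a + (s + 1 : ℕ) + 1) * genBinom (s + m + 1 + 1 + a) m := by
    push_cast
    linear_combination succ_mul_genBinom_succ (s + m + 1 + 1 + a) m
  have hB : ((s + 1 : ℕ) : ℝ) * genBinom (s + m + 1 + b) (s + 1)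
      = ((s + m + 1 : ℕ) + 1 + b - (s + 1 : ℕ)) * genBinom (s + m + 1 + b) s := by
    push_cast
    linear_combination succ_mul_genBinom_succ (s + m + 1 + b) s
  have h := contiguous_coeff_identity hA hB
  simp only [jacobiCoeff, show s + m + 1 + 1 - (s + 1) = m + 1 by omega,
    show s + m + 1 - (s + 1) = m by omega, show s + m + 1 - s = m + 1 by omega]
  push_cast at h ⊢
  rw [show (s : ℝ) + m + 1 + 1 + (a + 1) = s + m + 1 + 1 + a + 1 by ring, genBinom_add_one_succ,
    show (s : ℝ) + m + 1 + 1 + b = s + m + 1 + b + 1 by ring, genBinom_add_one_succ,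
    show (s : ℝ) + m + 1 + (a + 1) = s + m + 1 + 1 + a by ring]
  linear_combination h

end Contiguous

theorem jacobiP_contiguous (n : ℕ) (a b x : ℝ) :
    (2 * n + a + b + 3) * jacobiP (n + 1) a b x
      = (n + a + b + 2) * jacobiP (n + 1) (a + 1) b x - (n + 1 + b) * jacobiP n (a + 1) b x := by
  have hvu : (x + 1) / 2 - (x - 1) / 2 = 1 := by ring
  simp only [jacobiP_eq_sum_jacobiCoeff]
  generalize (x - 1) / 2 = u at *
  generalize (x + 1) / 2 = v at *
  set c := jacobiCoeff n (a + 1) b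
  set D := fun s => (2 * n + a + b + 3) * jacobiCoeff (n + 1) a b s
    - (n + a + b + 2) * jacobiCoeff (n + 1) (a + 1) b s
  -- multiplying by `v - u = 1` makes every term homogeneous of degree `n + 1`
  have hlow : ∑ s ∈ range (n + 1), c s * (u ^ s * v ^ (n - s))
      = ∑ s ∈ range (n + 1), c s * (u ^ s * v ^ (n + 1 - s))
        - ∑ s ∈ range (n + 1), c s * (u ^ (s + 1) * v ^ (n - s)) := by
    rw [← sum_sub_distrib]
    refine sum_congr rfl fun s hs => ?_
    rw [show n + 1 - s = n - s + 1 by have := mem_range.mp hs; omega]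
    linear_combination -c s * u ^ s * v ^ (n - s) * hvu
  have hhigh : (2 * n + a + b + 3) * ∑ s ∈ range (n + 1 + 1),
        jacobiCoeff (n + 1) a b s * (u ^ s * v ^ (n + 1 - s))
        - (n + a + b + 2) * ∑ s ∈ range (n + 1 + 1),
          jacobiCoeff (n + 1) (a + 1) b s * (u ^ s * v ^ (n + 1 - s))
      = ∑ s ∈ range (n + 2), D s * (u ^ s * v ^ (n + 1 - s)) := by
    simp only [mul_sum, ← sum_sub_distrib, D, sub_mul, mul_assoc]
  have hmid : ∀ s ∈ range n, D (s + 1) * (u ^ (s + 1) * v ^ (n + 1 - (s + 1)))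
      = -(n + 1 + b) * (c (s + 1) * (u ^ (s + 1) * v ^ (n + 1 - (s + 1)))
        - c s * (u ^ (s + 1) * v ^ (n - s))) := by
    intro s hs
    simp only [D, jacobiCoeff_contiguous_mid n a b (mem_range.mp hs), Nat.add_sub_add_right]
    ring
  rw [hlow, ← sub_eq_zero, sub_sub_eq_add_sub, add_sub_right_comm, hhigh, sum_range_succ',
    sum_range_succ, sum_congr rfl hmid, ← mul_sum,
    sum_range_succ' (fun s => c s * (u ^ s * v ^ (n + 1 - s))),
    sum_range_succ (fun s => c s * (u ^ (s + 1) * v ^ (n - s))), sum_sub_distrib]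
  simp only [D, jacobiCoeff_contiguous_zero, jacobiCoeff_contiguous_top, Nat.sub_self, Nat.sub_zero,
    pow_zero]
  ring

theorem sum_range_mul_eq_of_bidiagonal {R : Type*} [CommRing R] (j : ℕ)
    (F G α β P Q : ℕ → R)
    (hP₀ : P 0 = α 0 * Q 0) (hP : ∀ m, P (m + 1) = α (m + 1) * Q (m + 1) - β m * Q m)
    (hG : ∀ i < j, G i = F i * α i - F (i + 1) * β i) (hGj : G j = F j * α j) :
    ∑ i ∈ range (j + 1), F i * P i = ∑ i ∈ range (j + 1), G i * Q i := by
  have hdiag := (sum_range_succ' (fun i => F i * α i * Q i) j).symm.trans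
    (sum_range_succ (fun i => F i * α i * Q i) j)
  rw [sum_range_succ', sum_range_succ, hGj, hP₀,
    sum_congr rfl fun i hi => congrArg (· * Q i) (hG i (mem_range.mp hi))]
  simp only [hP, mul_sub, sub_mul, sum_sub_distrib, mul_assoc] at hdiag ⊢
  linear_combination hdiag

/-- `F^d_{ji}` with `b` in place of `1/2`, in rising-factorial form (`jacobiConnCoeff_eq_genBinom`):
`C(i+j+b, j) / C(d+i+j+b, j) = (i+b+1)_j / (d+i+b+1)_j`. -/
noncomputable def jacobiConnCoeff (b : ℝ) (d j i : ℕ) : ℝ :=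
  (-1) ^ (j - i) * genBinom d (j - i) * (d + 2 * i + b + 1) * pochN (i + b + 1) j
    / pochN (d + i + b + 1) (j + 1)

theorem jacobiConnCoeff_eq_genBinom {b : ℝ} (hb : -1 < b) (d j i : ℕ) :
    jacobiConnCoeff b d j i
      = (-1) ^ (j - i) * ((d + 2 * i + b + 1) / (d + i + j + b + 1)) * genBinom d (j - i)
          * genBinom (i + j + b) j / genBinom (d + i + j + b) j := by
  have hd : (0 : ℝ) ≤ d := d.cast_nonneg
  have hi : (0 : ℝ) ≤ i := i.cast_nonneg
  have hj : (0 : ℝ) ≤ j := j.cast_nonneg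
  have hQ : 0 < pochN (d + i + b + 1) j := pochN_pos _ (by linarith)
  have h : (d : ℝ) + i + j + b + 1 ≠ 0 := by linarith
  have hfac : (j ! : ℝ) ≠ 0 := by positivity
  rw [jacobiConnCoeff, show (i : ℝ) + j + b = i + b + j by ring, genBinom_add_self,
    show (d : ℝ) + i + j + b = d + i + b + j by ring, genBinom_add_self, pochN_succ]
  field_simp
  ring

theorem jacobiConnCoeff_succ {b : ℝ} (hb : -1 < b) (d : ℕ) {i j : ℕ} (hij : i < j) :
    jacobiConnCoeff b (d + 1) j i
      = jacobiConnCoeff b d j i * ((i + d + b + 1) / (2 * i + d + b + 1))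
        - jacobiConnCoeff b d j (i + 1) * ((i + b + 1) / (2 * i + d + b + 3)) := by
  obtain ⟨k, rfl⟩ : ∃ k, j = i + k + 1 := ⟨j - i - 1, by omega⟩
  have hd : (0 : ℝ) ≤ d := d.cast_nonneg
  have hi : (0 : ℝ) ≤ i := i.cast_nonneg
  have hP : (i + b + 1) * pochN (i + b + 2) (i + k + 1)
      = pochN (i + b + 1) (i + k + 1) * (i + b + 1 + (i + k + 1 : ℕ)) := by
    rw [← pochN_succ, pochN_succ' (i + b + 1) (i + k + 1),
      show (i : ℝ) + b + 1 + 1 = i + b + 2 by ring]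
  have habs := succ_mul_genBinom_succ d k
  have hQ : 0 < pochN (d + i + b + 2) (i + k + 1) := pochN_pos _ (by linarith)
  have h1 : (d : ℝ) + i + b + 1 ≠ 0 := by linarith
  have h2 : 2 * (i : ℝ) + d + b + 1 ≠ 0 := by linarith
  have h3 : 2 * (i : ℝ) + d + b + 3 ≠ 0 := by linarith
  have h4 : (d : ℝ) + i + b + 2 + (i + k + 1 : ℕ) ≠ 0 := by push_cast; linarith
  simp only [jacobiConnCoeff, show i + k + 1 - i = k + 1 by omega,
    show i + k + 1 - (i + 1) = k by omega]
  rw [Nat.cast_succ d, Nat.cast_succ i, show (d : ℝ) + 1 + i + b + 1 = d + i + b + 2 by ring,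
    show (d : ℝ) + (i + 1) + b + 1 = d + i + b + 2 by ring,
    show (i : ℝ) + 1 + b + 1 = i + b + 2 by ring,
    pochN_succ (d + i + b + 2), pochN_succ' (d + i + b + 1),
    show (d : ℝ) + i + b + 1 + 1 = d + i + b + 2 by ring, genBinom_add_one_succ, pow_succ]
  field_simp
  push_cast at hP ⊢
  linear_combination ((d + i + b + 1) * (2 * i + d + b + 1) * (2 * i + d + b + 3))
    * (genBinom (d : ℝ) k * hP + pochN (i + b + 1) (i + k + 1) * habs)

theorem jacobiConnCoeff_succ_self {b : ℝ} (hb : -1 < b) (d j : ℕ) :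
    jacobiConnCoeff b (d + 1) j j
      = jacobiConnCoeff b d j j * ((j + d + b + 1) / (2 * j + d + b + 1)) := by
  have hd : (0 : ℝ) ≤ d := d.cast_nonneg
  have hj : (0 : ℝ) ≤ j := j.cast_nonneg
  have hQ : 0 < pochN (d + j + b + 2) j := pochN_pos _ (by linarith)
  have h1 : (d : ℝ) + j + b + 1 ≠ 0 := by linarith
  have h2 : 2 * (j : ℝ) + d + b + 1 ≠ 0 := by linarith
  have h3 : (d : ℝ) + j + b + 2 + j ≠ 0 := by linarith
  simp only [jacobiConnCoeff, Nat.sub_self, pow_zero, genBinom_zero_right]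
  rw [Nat.cast_succ d, show (d : ℝ) + 1 + j + b + 1 = d + j + b + 2 by ring,
    pochN_succ (d + j + b + 2),
    pochN_succ' (d + j + b + 1), show (d : ℝ) + j + b + 1 + 1 = d + j + b + 2 by ring]
  field_simp
  ring

theorem jacobiConnCoeff_eq_zero_of_lt (b : ℝ) {d j i : ℕ} (h : d < j - i) :
    jacobiConnCoeff b d j i = 0 := by
  rw [jacobiConnCoeff, genBinom_natCast_of_lt _ h]
  simp

theorem jacobiConnCoeff_zero_self {b : ℝ} (hb : -1 < b) (j : ℕ) :
    jacobiConnCoeff b 0 j j = 1 := by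
  have hj : (0 : ℝ) ≤ j := j.cast_nonneg
  have hP : 0 < pochN (j + b + 1) j := pochN_pos _ (by linarith)
  have h : (j : ℝ) + b + 1 + j ≠ 0 := by linarith
  simp only [jacobiConnCoeff, Nat.sub_self, pow_zero, genBinom_zero_right, Nat.cast_zero, zero_add]
  rw [pochN_succ]
  field_simp
  ring

theorem jacobiP_zero_left (a b x : ℝ) : jacobiP 0 a b x = 1 := by
  simp [jacobiP, genBinom]

theorem jacobiP_succ_eq_jacobiP_add_one {b : ℝ} (hb : -1 < b) (d m : ℕ) (x : ℝ) :
    jacobiP (m + 1) d b x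
      = ((m + 1 : ℕ) + d + b + 1) / (2 * (m + 1 : ℕ) + d + b + 1)
          * jacobiP (m + 1) (d + 1 : ℕ) b x
        - (m + b + 1) / (2 * m + d + b + 3) * jacobiP m (d + 1 : ℕ) b x := by
  have hm : (0 : ℝ) ≤ m := m.cast_nonneg
  have hd : (0 : ℝ) ≤ d := d.cast_nonneg
  have h : 2 * (m : ℝ) + d + b + 3 ≠ 0 := by linarith
  push_cast
  rw [div_mul_eq_mul_div, div_mul_eq_mul_div,
    show 2 * ((m : ℝ) + 1) + d + b + 1 = 2 * m + d + b + 3 by ring,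
    div_sub_div_same, eq_div_iff h]
  linear_combination jacobiP_contiguous m d b x

theorem jacobiP_zero_eq_sum_jacobiConnCoeff {b : ℝ} (hb : -1 < b) (d j : ℕ) (x : ℝ) :
    jacobiP j 0 b x = ∑ i ∈ range (j + 1), jacobiConnCoeff b d j i * jacobiP i d b x := by
  induction d with
  | zero =>
    rw [sum_range_succ, jacobiConnCoeff_zero_self hb, Nat.cast_zero, one_mul, right_eq_add]
    exact sum_eq_zero fun i hi => by
      rw [jacobiConnCoeff_eq_zero_of_lt b (by have := mem_range.mp hi; omega), zero_mul]
  | succ d ih =>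
    rw [ih]
    refine sum_range_mul_eq_of_bidiagonal j _ _ (fun i => (i + d + b + 1) / (2 * i + d + b + 1))
      (fun m => (m + b + 1) / (2 * m + d + b + 3)) _ _ ?_
      (jacobiP_succ_eq_jacobiP_add_one hb d · x)
      (fun i hi => jacobiConnCoeff_succ hb d hi) (jacobiConnCoeff_succ_self hb d j)
    have h : (d : ℝ) + b + 1 ≠ 0 := by linarith [d.cast_nonneg (α := ℝ)]
    simp [jacobiP_zero_left, h]

theorem stmt17_general (δ j : ℕ) (ρ : ℝ) :
    R3 0 0 j ρ * (1 - ρ ^ 2) ^ (δ : ℝ)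
      = ∑ i ∈ Finset.Icc (j - δ) j,
          (-1) ^ (j - i) * (((δ : ℝ) + 2 * (i : ℝ) + 3 / 2) / ((δ : ℝ) + (i : ℝ) + (j : ℝ) + 3 / 2)) *
            genBinom (δ : ℝ) (j - i) * genBinom ((i : ℝ) + (j : ℝ) + 1 / 2) j /
            genBinom ((δ : ℝ) + (i : ℝ) + (j : ℝ) + 1 / 2) j * R3 (δ : ℝ) 0 i ρ := by
  have hb : (-1 : ℝ) < 1 / 2 := by norm_num
  calc R3 0 0 j ρ * (1 - ρ ^ 2) ^ (δ : ℝ)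
      = ∑ i ∈ range (j + 1), jacobiConnCoeff (1 / 2) δ j i * R3 δ 0 i ρ := by
        simp only [R3, pow_zero, Real.rpow_zero, Nat.cast_zero, zero_add, one_mul]
        rw [jacobiP_zero_eq_sum_jacobiConnCoeff hb δ, sum_mul]
        exact sum_congr rfl fun i _ => by ring
    _ = ∑ i ∈ Icc (j - δ) j, jacobiConnCoeff (1 / 2) δ j i * R3 δ 0 i ρ := by
        refine (sum_subset (fun i hi => ?_) fun i hi hi' => ?_).symm
        · simp only [mem_Icc, mem_range] at hi ⊢; omega
        · simp only [mem_Icc, mem_range] at hi hi'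
          rw [jacobiConnCoeff_eq_zero_of_lt _ (by omega), zero_mul]
    _ = _ := sum_congr rfl fun i _ => by rw [jacobiConnCoeff_eq_genBinom hb]; ring_nf

/-- `R_{2j}^{0,0}(ρ)(1−ρ²)^δ = Σ_{max(0,j−δ) ≤ i ≤ j} F_{ji}^δ R_{2i}^{0,δ}(ρ)`,
with `F_{ji}^δ = (−1)^{j−i} ((δ+2i+3/2)/(δ+i+j+3/2)) C(δ, j−i) C(i+j+1/2, j) / C(δ+i+j+1/2, j)`. -/
theorem stmt17 (δ j : ℕ) (ρ : ℝ) (hρ : ρ ∈ Set.Icc (0:ℝ) 1) :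
    R3 0 0 j ρ * (1 - ρ ^ 2) ^ (δ : ℝ)
      = ∑ i ∈ Finset.Icc (j - δ) j,
          (-1) ^ (j - i) * (((δ : ℝ) + 2 * (i : ℝ) + 3 / 2) / ((δ : ℝ) + (i : ℝ) + (j : ℝ) + 3 / 2)) *
            genBinom (δ : ℝ) (j - i) * genBinom ((i : ℝ) + (j : ℝ) + 1 / 2) j /
            genBinom ((δ : ℝ) + (i : ℝ) + (j : ℝ) + 1 / 2) j * R3 (δ : ℝ) 0 i ρ :=
  stmt17_general δ j ρ
end
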